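/- For the stationary front, the bound on the kernel of L₋: if L₋ = −ε^{−2}Δ − μ_M − |φ̃| + |φ̃|² on ℓ²(ℤ) and φ̃(n) > 0 for all n with L₋φ̃ = 0, and φ̃ ∈ ℓ^∞(ℤ) but φ̃ ∉ ℓ²(ℤ) (since φ̃(n) → 2/3 as n → +∞), then 0 is not an ℓ² eigenvalue arising from φ̃, and by positivity of φ̃, L₋ has no negative eigenvalues (n₋ = 0). -/

import Mathlib

/-!
Since `L₋φ̃ = 0`, an eigenvector `u` of `L₋` with eigenvalue `α` satisfies the discrete
Wronskian identity `W(n) - W(n-1) = -ε²α φ̃(n) u(n)` for `W(n) = φ̃(n) u(n+1) - φ̃(n+1) u(n)`.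
For `α < 0` this makes `W` strictly increasing wherever `u > 0`, and an `ℓ²` eigenvector forces
`W → 0` at both ends, since `φ̃` is bounded. A Sturm-type argument then shows that `u` cannot be
positive anywhere: at a point with `u(n) > 0`, running forward gives `W(n) < 0`, running backward
gives `W(n-1) > 0`, contradicting `W(n) > W(n-1)`. Applied to `±u`, this gives `u = 0`.
-/

noncomputable section

def discLap (u : ℤ → ℝ) (n : ℤ) : ℝ := u (n + 1) + u (n - 1) - 2 * u n

/-- The operator `L₋ = −ε⁻²Δ − μ_M − |φ̃| + |φ̃|²` (acting pointwise on sequences),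
with `μ_M = −2/9`. -/
def Lminus (ε : ℝ) (φt : ℤ → ℝ) (u : ℤ → ℝ) (n : ℤ) : ℝ :=
  -(ε^2)⁻¹ * discLap u n - (-(2/9)) * u n - |φt n| * u n + (φt n)^2 * u n

open Filter Topology

def wronskian (φ u : ℤ → ℝ) (n : ℤ) : ℝ := φ n * u (n + 1) - φ (n + 1) * u n

lemma wronskian_neg_right (φ u : ℤ → ℝ) : wronskian φ (-u) = -wronskian φ u := by
  funext n
  simp only [wronskian, Pi.neg_apply]
  ring

lemma wronskian_comp_neg (φ u : ℤ → ℝ) (n : ℤ) :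
    wronskian (fun k => φ (-k)) (fun k => u (-k)) n = -wronskian φ u (-n - 1) := by
  simp only [wronskian, show -(n + 1) = -n - 1 by ring, show -n - 1 + 1 = -n by ring]
  ring

lemma tendsto_wronskian_cofinite {φ u : ℤ → ℝ} {M : ℝ} (hM : ∀ n, |φ n| ≤ M)
    (hu : Tendsto u cofinite (𝓝 0)) : Tendsto (wronskian φ u) cofinite (𝓝 0) := by
  have hbdd : IsBoundedUnder (· ≤ ·) cofinite (norm ∘ φ) := isBoundedUnder_of ⟨M, hM⟩
  have hbdd_succ : IsBoundedUnder (· ≤ ·) cofinite (norm ∘ fun n => φ (n + 1)) :=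
    isBoundedUnder_of ⟨M, fun n => hM (n + 1)⟩
  have hu_succ : Tendsto (fun n => u (n + 1)) cofinite (𝓝 0) :=
    hu.comp (add_left_injective 1).tendsto_cofinite
  have := (isBoundedUnder_le_mul_tendsto_zero hbdd hu_succ).sub
    (isBoundedUnder_le_mul_tendsto_zero hbdd_succ hu)
  rwa [sub_zero] at this

lemma tendsto_cofinite_zero_of_summable_sq {u : ℤ → ℝ} (hu : Summable fun n => u n ^ 2) :
    Tendsto u cofinite (𝓝 0) := by
  have := hu.tendsto_cofinite_zero.sqrt
  simp only [Real.sqrt_sq_eq_abs, Real.sqrt_zero] at this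
  exact (tendsto_zero_iff_abs_tendsto_zero u).mpr this

lemma Lminus_wronskian_step {ε α : ℝ} (hε : ε ≠ 0) {φ u : ℤ → ℝ}
    (hφ : ∀ n, Lminus ε φ φ n = 0) (hu : ∀ n, Lminus ε φ u n = α * u n) (n : ℤ) :
    wronskian φ u n - wronskian φ u (n - 1) = -(ε ^ 2 * α) * φ n * u n := by
  have hφn := hφ n
  have hun := hu n
  simp only [Lminus, discLap] at hφn hun
  simp only [wronskian, sub_add_cancel]
  field_simp at hφn hun
  linear_combination (u n * hφn - φ n * hun) / 9

section Sturm

variable {φ u : ℤ → ℝ} {c : ℝ}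

lemma wronskian_step_comp_neg
    (hstep : ∀ n, wronskian φ u n - wronskian φ u (n - 1) = c * φ n * u n) (n : ℤ) :
    wronskian (fun k => φ (-k)) (fun k => u (-k)) n
      - wronskian (fun k => φ (-k)) (fun k => u (-k)) (n - 1) = c * φ (-n) * u (-n) := by
  rw [wronskian_comp_neg, wronskian_comp_neg, show -(n - 1) - 1 = -n by ring, ← hstep (-n)]
  ring

variable (hφ : ∀ n, 0 < φ n) (hc : 0 < c)
  (hstep : ∀ n, wronskian φ u n - wronskian φ u (n - 1) = c * φ n * u n)
include hφ hc hstep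

lemma pos_succ_and_wronskian_lt_succ {n : ℤ} (hun : 0 < u n) (hW : 0 ≤ wronskian φ u n) :
    0 < u (n + 1) ∧ wronskian φ u n < wronskian φ u (n + 1) := by
  have hu_succ : 0 < u (n + 1) := by
    have : 0 < φ n * u (n + 1) := by
      unfold wronskian at hW
      nlinarith [mul_pos (hφ (n + 1)) hun]
    exact pos_of_mul_pos_right this (hφ n).le
  refine ⟨hu_succ, ?_⟩
  have := hstep (n + 1)
  rw [add_sub_cancel_right] at this
  nlinarith [mul_pos (mul_pos hc (hφ (n + 1))) hu_succ]

lemma wronskian_le_of_pos_of_nonneg {n : ℤ} (hun : 0 < u n) (hW : 0 ≤ wronskian φ u n) :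
    ∀ k, n ≤ k → wronskian φ u n ≤ wronskian φ u k := by
  suffices ∀ k, n ≤ k → 0 < u k ∧ wronskian φ u n ≤ wronskian φ u k from
    fun k hk => (this k hk).2
  refine Int.leInduction ⟨hun, le_rfl⟩ fun k _ ⟨huk, hWk⟩ => ?_
  obtain ⟨hu_succ, hW_succ⟩ := pos_succ_and_wronskian_lt_succ hφ hc hstep huk (hW.trans hWk)
  exact ⟨hu_succ, hWk.trans hW_succ.le⟩

lemma wronskian_neg_of_pos (hW : Tendsto (wronskian φ u) atTop (𝓝 0)) {n : ℤ} (hun : 0 < u n) :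
    wronskian φ u n < 0 := by
  by_contra! hWn
  obtain ⟨hu_succ, hW_succ⟩ := pos_succ_and_wronskian_lt_succ hφ hc hstep hun hWn
  have hmono := wronskian_le_of_pos_of_nonneg hφ hc hstep hu_succ (hWn.trans hW_succ.le)
  have : wronskian φ u (n + 1) ≤ 0 := ge_of_tendsto hW (eventually_ge_atTop _ |>.mono hmono)
  linarith

lemma wronskian_sub_one_pos_of_pos (hW : Tendsto (wronskian φ u) atBot (𝓝 0)) {n : ℤ}
    (hun : 0 < u n) : 0 < wronskian φ u (n - 1) := by
  have hW_refl : Tendsto (wronskian (fun k => φ (-k)) (fun k => u (-k))) atTop (𝓝 0) := by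
    have hrefl : Tendsto (fun k : ℤ => -k - 1) atTop atBot :=
      tendsto_atBot_add_const_right _ (-1) tendsto_neg_atTop_atBot
    simpa only [neg_zero] using (hW.comp hrefl).neg.congr fun k => (wronskian_comp_neg φ u k).symm
  have := wronskian_neg_of_pos (fun k => hφ (-k)) hc (wronskian_step_comp_neg hstep) hW_refl
    (n := -n) (by rwa [neg_neg])
  rw [wronskian_comp_neg, neg_neg] at this
  linarith

lemma nonpos_of_wronskian_step (hW : Tendsto (wronskian φ u) cofinite (𝓝 0)) (n : ℤ) :
    u n ≤ 0 := by
  by_contra! hun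
  have hW_lt := wronskian_neg_of_pos hφ hc hstep (hW.mono_left atTop_le_cofinite) hun
  have hW_pred := wronskian_sub_one_pos_of_pos hφ hc hstep (hW.mono_left atBot_le_cofinite) hun
  nlinarith [hstep n, mul_pos (mul_pos hc (hφ n)) hun]

lemma eq_zero_of_wronskian_step {M : ℝ} (hM : ∀ n, |φ n| ≤ M) (hu : Tendsto u cofinite (𝓝 0)) :
    u = 0 := by
  have hstep_neg : ∀ n, wronskian φ (-u) n - wronskian φ (-u) (n - 1) = c * φ n * (-u) n := by
    intro n
    simp only [wronskian_neg_right, Pi.neg_apply]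
    linear_combination -hstep n
  have hu_neg : Tendsto (-u) cofinite (𝓝 0) := by
    rw [← neg_zero]
    exact hu.neg
  funext n
  refine le_antisymm (nonpos_of_wronskian_step hφ hc hstep (tendsto_wronskian_cofinite hM hu) n) ?_
  simpa only [Pi.neg_apply, Pi.zero_apply, neg_nonpos] using
    nonpos_of_wronskian_step hφ hc hstep_neg (tendsto_wronskian_cofinite hM hu_neg) n

end Sturm

theorem Lminus_no_negative_eigenvalues_general (ε : ℝ) (hε : 0 < ε) (φt : ℤ → ℝ)
    (hpos : ∀ n, 0 < φt n)
    (hbdd : ∃ M : ℝ, ∀ n, |φt n| ≤ M)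
    (hker : ∀ n, Lminus ε φt φt n = 0)
    (hnotl2 : ¬ Summable (fun n : ℤ => (φt n)^2)) :
    (¬ ∃ u : ℤ → ℝ, u = φt ∧ u ≠ 0 ∧ Summable (fun n => (u n)^2) ∧
        ∀ n, Lminus ε φt u n = 0) ∧
    ¬ ∃ α : ℝ, α < 0 ∧ ∃ u : ℤ → ℝ, u ≠ 0 ∧ Summable (fun n => (u n)^2) ∧
        ∀ n, Lminus ε φt u n = α * u n := by
  refine ⟨fun ⟨u, hu, _, hsum, _⟩ => hnotl2 (hu ▸ hsum), ?_⟩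
  rintro ⟨α, hα, u, hne, hsum, heig⟩
  obtain ⟨M, hM⟩ := hbdd
  have hc : 0 < -(ε ^ 2 * α) := neg_pos.mpr (mul_neg_of_pos_of_neg (by positivity) hα)
  exact hne (eq_zero_of_wronskian_step hpos hc (Lminus_wronskian_step hε.ne' hker heig) hM
    (tendsto_cofinite_zero_of_summable_sq hsum))

/-- for the discrete Maxwell front `φ̃`: a strictly positive bounded
sequence with `L₋φ̃ = 0`, limits `0` at `−∞` and `2/3` at `+∞`, and `φ̃ ∉ ℓ²(ℤ)`.
Then `0` is not an `ℓ²` eigenvalue of `L₋` arising from `φ̃` (i.e. `φ̃` is not an `ℓ²`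
eigenvector of eigenvalue `0`), and by positivity of `φ̃`, `L₋` has no negative
eigenvalues (`n₋ = 0`). -/
theorem Lminus_no_negative_eigenvalues (ε : ℝ) (hε : 0 < ε) (φt : ℤ → ℝ)
    (hpos : ∀ n, 0 < φt n)
    (hbdd : ∃ M : ℝ, ∀ n, |φt n| ≤ M)
    (hker : ∀ n, Lminus ε φt φt n = 0)
    (hlim_top : Filter.Tendsto φt Filter.atTop (nhds (2/3)))
    (hlim_bot : Filter.Tendsto φt Filter.atBot (nhds 0))
    (hnotl2 : ¬ Summable (fun n : ℤ => (φt n)^2)) :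
    (¬ ∃ u : ℤ → ℝ, u = φt ∧ u ≠ 0 ∧ Summable (fun n => (u n)^2) ∧
        ∀ n, Lminus ε φt u n = 0) ∧
    ¬ ∃ α : ℝ, α < 0 ∧ ∃ u : ℤ → ℝ, u ≠ 0 ∧ Summable (fun n => (u n)^2) ∧
        ∀ n, Lminus ε φt u n = α * u n :=
  Lminus_no_negative_eigenvalues_general ε hε φt hpos hbdd hker hnotl2
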